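/- arXiv:1701.05956 — 2 statements merged into one kernel-verified Lean document; each statement's English description precedes it below -/
import Mathlib

section
/- Let F be a field, let A and B be commutative F-algebras, and let m ⊂ A and n ⊂ B be ideals such that the quotient maps induce F-algebra isomorphisms A/m ≅ F and B/n ≅ F. Let p be the ideal of A ⊗_F B generated by {a ⊗ 1 : a ∈ m} ∪ {1 ⊗ b : b ∈ n}. Assume that for all i, the F-vector spaces m^i/m^{i+1} and n^i/n^{i+1} are finite dimensional. Then for every natural number k, dim_F(p^k/p^{k+1}) = Σ_{i+j=k} dim_F(m^i/m^{i+1}) · dim_F(n^j/n^{j+1}). Equivalently, the Hilbert series multiply: Σ_k dim_F(p^k/p^{k+1}) t^k = (Σ_i dim_F(m^i/m^{i+1}) t^i) · (Σ_j dim_F(n^j/n^{j+1}) t^j) as formal power series. -/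
/-!
Choose `F`-linear complements `Cᵢ` of `mⁱ⁺¹` in `mⁱ` and `Dⱼ` of `nʲ⁺¹` in `nʲ`, so that
`Cᵢ ≅ mⁱ/mⁱ⁺¹` and `Dⱼ ≅ nʲ/nʲ⁺¹`. As an `F`-space, `pᵏ` is the sum of the `mⁱ ⊗ nʲ` with
`i + j = k`, and splitting `mⁱ = Cᵢ ⊕ mⁱ⁺¹`, `nʲ = Dⱼ ⊕ nʲ⁺¹` gives
`pᵏ = ∑_{i+j=k} Cᵢ ⊗ Dⱼ + pᵏ⁺¹`. This sum is direct and meets `pᵏ⁺¹` trivially: if `fᵢ` is the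
identity on `Cᵢ` and vanishes on `mⁱ⁺¹`, and `gⱼ` likewise for `n`, then `fᵢ ⊗ gⱼ` is the
identity on `Cᵢ ⊗ Dⱼ` and vanishes on every other summand and on `pᵏ⁺¹`, since `a + b ≥ i + j`
with `(a, b) ≠ (i, j)` forces `a > i` or `b > j`. Hence `pᵏ/pᵏ⁺¹ ≅ ⨁_{i+j=k} Cᵢ ⊗ Dⱼ`.
-/

open TensorProduct

/-- The `i`-th graded piece `mⁱ/mⁱ⁺¹` of the associated graded ring of `A` along the
ideal `m`, as an `F`-vector space. -/
abbrev gradedPiece (F : Type*) [Field F] {A : Type*} [CommRing A] [Algebra F A]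
    (m : Ideal A) (i : ℕ) :=
  ↥(Submodule.restrictScalars F (m ^ i)) ⧸
    (Submodule.restrictScalars F (m ^ (i + 1))).comap
      (Submodule.restrictScalars F (m ^ i)).subtype

theorem exists_disjoint_sup_eq_of_le {α : Type*} [Lattice α] [BoundedOrder α] [IsModularLattice α]
    [ComplementedLattice α] {a b : α} (h : a ≤ b) : ∃ c, Disjoint c a ∧ c ⊔ a = b := by
  obtain ⟨c, hc⟩ := exists_isCompl a
  refine ⟨b ⊓ c, hc.symm.disjoint.mono_left inf_le_right, ?_⟩
  rw [inf_sup_assoc_of_le c h, sup_comm, hc.sup_eq_top, inf_top_eq]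

namespace Submodule

section Semiring

variable {R M : Type*} [Semiring R] [AddCommMonoid M] [Module R M] {ι : Type*} {s : Finset ι}
  {X : ι → Submodule R M} {π : ι → M →ₗ[R] M}

theorem finset_sup_le_eqLocus_sum (hid : ∀ i ∈ s, ∀ x ∈ X i, π i x = x)
    (hzero : ∀ i ∈ s, ∀ j ∈ s, i ≠ j → X j ≤ LinearMap.ker (π i)) :
    s.sup X ≤ LinearMap.eqLocus (∑ i ∈ s, π i) LinearMap.id := by
  classical
  refine Finset.sup_le fun j hj x hx => ?_
  rw [LinearMap.mem_eqLocus, LinearMap.sum_apply, LinearMap.id_apply,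
    Finset.sum_eq_single_of_mem j hj fun i hi hij => hzero i hi j hj hij hx, hid j hj x hx]

theorem disjoint_finset_sup_of_le_ker (hid : ∀ i ∈ s, ∀ x ∈ X i, π i x = x)
    (hzero : ∀ i ∈ s, ∀ j ∈ s, i ≠ j → X j ≤ LinearMap.ker (π i)) {Y : Submodule R M}
    (hY : ∀ i ∈ s, Y ≤ LinearMap.ker (π i)) : Disjoint (s.sup X) Y := by
  rw [disjoint_def]
  intro x hxX hxY
  calc x = (∑ i ∈ s, π i) x := (finset_sup_le_eqLocus_sum hid hzero hxX).symm
    _ = 0 := by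
      rw [LinearMap.sum_apply]
      exact Finset.sum_eq_zero fun i hi => hY i hi hxY

end Semiring

section Ring

variable {R M : Type*} [Ring R] [AddCommGroup M] [Module R M]

theorem isCompl_comap_subtype_of_disjoint_of_sup_eq {P P' U : Submodule R M}
    (hd : Disjoint U P') (hs : U ⊔ P' = P) :
    IsCompl (P'.comap P.subtype) (U.comap P.subtype) := by
  rw [P.mapIic.isCompl_iff, Set.Iic.isCompl_iff]
  simp only [coe_mapIic_apply, map_comap_subtype, inf_of_le_right (hs ▸ le_sup_left : U ≤ P),
    inf_of_le_right (hs ▸ le_sup_right : P' ≤ P)]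
  exact ⟨hd.symm, sup_comm U P' ▸ hs⟩

noncomputable def quotientComapSubtypeEquivOfDisjointOfSupEq {P P' U : Submodule R M}
    (hd : Disjoint U P') (hs : U ⊔ P' = P) : (P ⧸ P'.comap P.subtype) ≃ₗ[R] U :=
  (quotientEquivOfIsCompl _ _ (isCompl_comap_subtype_of_disjoint_of_sup_eq hd hs)).trans
    (comapSubtypeEquivOfLe (hs ▸ le_sup_left))

end Ring

section DivisionRing

variable {K V : Type*} [DivisionRing K] [AddCommGroup V] [Module K V]

theorem exists_eq_self_and_le_ker_of_disjoint {U P : Submodule K V} (hd : Disjoint U P) :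
    ∃ f : V →ₗ[K] V, (∀ x ∈ U, f x = x) ∧ P ≤ LinearMap.ker f := by
  have hinj : LinearMap.ker (P.mkQ ∘ₗ U.subtype) = ⊥ := by
    rw [LinearMap.ker_comp, ker_mkQ, ← disjoint_iff_comap_eq_bot]
    exact hd
  obtain ⟨g, hg⟩ := LinearMap.exists_leftInverse_of_injective _ hinj
  refine ⟨U.subtype ∘ₗ g ∘ₗ P.mkQ, fun x hx => ?_, fun x hx => ?_⟩
  · simpa using congr(($hg ⟨x, hx⟩ : V))
  · simp [(Submodule.Quotient.mk_eq_zero P).mpr hx]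

theorem finrank_finset_sup_eq_sum {ι : Type*} [DecidableEq ι] {s : Finset ι}
    {X : ι → Submodule K V} [∀ i, FiniteDimensional K (X i)] {π : ι → V →ₗ[K] V}
    (hid : ∀ i ∈ s, ∀ x ∈ X i, π i x = x)
    (hzero : ∀ i ∈ s, ∀ j ∈ s, i ≠ j → X j ≤ LinearMap.ker (π i)) :
    Module.finrank K ↥(s.sup X) = ∑ i ∈ s, Module.finrank K (X i) := by
  induction s using Finset.induction_on with
  | empty => simp
  | insert a s ha ih =>
    have hid' : ∀ i ∈ s, ∀ x ∈ X i, π i x = x := fun i hi => hid i (Finset.mem_insert_of_mem hi)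
    have hzero' : ∀ i ∈ s, ∀ j ∈ s, i ≠ j → X j ≤ LinearMap.ker (π i) := fun i hi j hj =>
      hzero i (Finset.mem_insert_of_mem hi) j (Finset.mem_insert_of_mem hj)
    have hdisj : Disjoint (X a) (s.sup X) := (disjoint_finset_sup_of_le_ker hid' hzero'
      fun i hi => hzero i (Finset.mem_insert_of_mem hi) a (Finset.mem_insert_self a s)
        (ne_of_mem_of_not_mem hi ha)).symm
    rw [Finset.sup_insert, Finset.sum_insert ha, ← ih hid' hzero',
      ← finrank_sup_add_finrank_inf_eq, hdisj.eq_bot, finrank_bot, add_zero]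

end DivisionRing

section Field

variable {K V W : Type*} [Field K] [AddCommGroup V] [Module K V] [AddCommGroup W] [Module K W]

noncomputable def tensorEquivMap₂Mk (p : Submodule K V) (q : Submodule K W) :
    p ⊗[K] q ≃ₗ[K] map₂ (TensorProduct.mk K V W) p q :=
  (LinearEquiv.ofInjective _ (Module.Flat.tensorProduct_mapIncl_injective_of_left p q)).trans
    (LinearEquiv.ofEq _ _ (range_mapIncl p q))

instance (p : Submodule K V) (q : Submodule K W) [FiniteDimensional K p] [FiniteDimensional K q] :
    FiniteDimensional K (map₂ (TensorProduct.mk K V W) p q) :=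
  (tensorEquivMap₂Mk p q).finiteDimensional

theorem finrank_map₂_mk (p : Submodule K V) (q : Submodule K W) :
    Module.finrank K (map₂ (TensorProduct.mk K V W) p q) =
      Module.finrank K p * Module.finrank K q := by
  rw [← (tensorEquivMap₂Mk p q).finrank_eq, Module.finrank_tensorProduct]

end Field

section CommSemiring

variable {R V W V' W' : Type*} [CommSemiring R] [AddCommMonoid V] [Module R V]
  [AddCommMonoid W] [Module R W] [AddCommMonoid V'] [Module R V'] [AddCommMonoid W'] [Module R W']

theorem map_apply_eq_self_of_mem_map₂_mk {p : Submodule R V} {q : Submodule R W}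
    {f : V →ₗ[R] V} {g : W →ₗ[R] W} (hf : ∀ x ∈ p, f x = x) (hg : ∀ y ∈ q, g y = y) :
    ∀ z ∈ map₂ (TensorProduct.mk R V W) p q, TensorProduct.map f g z = z := fun _ hz =>
  (map₂_le (r := LinearMap.eqLocus (TensorProduct.map f g) LinearMap.id)).2
    (fun x hx y hy => by simp [hf x hx, hg y hy]) hz

theorem map₂_mk_le_ker_map {p : Submodule R V} {q : Submodule R W} {f : V →ₗ[R] V'}
    {g : W →ₗ[R] W'} (h : p ≤ LinearMap.ker f ∨ q ≤ LinearMap.ker g) :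
    map₂ (TensorProduct.mk R V W) p q ≤ LinearMap.ker (TensorProduct.map f g) :=
  map₂_le.2 fun x hx y hy => by
    rcases h with h | h <;> simp [LinearMap.mem_ker.1 (h ‹_›)]

end CommSemiring

end Submodule

open Submodule Finset.HasAntidiagonal

section TensorFiltration

variable {R V W : Type*} [CommSemiring R] [AddCommMonoid V] [Module R V] [AddCommMonoid W]
  [Module R W]

def tensorFiltration (P : ℕ → Submodule R V) (Q : ℕ → Submodule R W) (k : ℕ) :
    Submodule R (V ⊗[R] W) :=
  (antidiagonal k).sup fun ij => map₂ (TensorProduct.mk R V W) (P ij.1) (Q ij.2)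

variable {P C : ℕ → Submodule R V} {Q D : ℕ → Submodule R W}

theorem tensorFiltration_mono (hC : C ≤ P) (hD : D ≤ Q) (k : ℕ) :
    tensorFiltration C D k ≤ tensorFiltration P Q k :=
  Finset.sup_mono_fun fun _ _ => map₂_le_map₂ (hC _) (hD _)

theorem map₂_le_tensorFiltration {a b k : ℕ} (h : a + b = k) :
    map₂ (TensorProduct.mk R V W) (P a) (Q b) ≤ tensorFiltration P Q k :=
  Finset.le_sup_of_le (b := (a, b)) (mem_antidiagonal.2 h) le_rfl

theorem tensorFiltration_succ_le (hP : Antitone P) (hQ : Antitone Q) (k : ℕ) :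
    tensorFiltration P Q (k + 1) ≤ tensorFiltration P Q k := by
  refine Finset.sup_le fun ⟨a, b⟩ hab => ?_
  rw [mem_antidiagonal] at hab
  rcases a with _ | a
  · exact (map₂_le_map₂_right (hQ (by omega : k ≤ b))).trans (map₂_le_tensorFiltration (by omega))
  · exact (map₂_le_map₂_left (hP a.le_succ)).trans (map₂_le_tensorFiltration (by omega))

theorem tensorFiltration_le_sup (hCs : ∀ i, C i ⊔ P (i + 1) = P i)
    (hDs : ∀ j, D j ⊔ Q (j + 1) = Q j) (k : ℕ) :
    tensorFiltration P Q k ≤ tensorFiltration C D k ⊔ tensorFiltration P Q (k + 1) := by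
  refine Finset.sup_le fun ⟨i, j⟩ hij => ?_
  rw [mem_antidiagonal] at hij
  dsimp only
  rw [← hCs i, map₂_sup_left, ← hDs j, map₂_sup_right]
  refine sup_le (sup_le ?_ ?_) ?_
  · exact le_sup_of_le_left (map₂_le_tensorFiltration hij)
  · exact le_sup_of_le_right ((map₂_le_map₂_left (hCs i ▸ le_sup_left)).trans
      (map₂_le_tensorFiltration (by omega)))
  · exact le_sup_of_le_right ((map₂_le_map₂_right (hDs j).le).trans
      (map₂_le_tensorFiltration (by omega)))

theorem tensorFiltration_sup_succ_eq (hP : Antitone P) (hQ : Antitone Q)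
    (hCs : ∀ i, C i ⊔ P (i + 1) = P i) (hDs : ∀ j, D j ⊔ Q (j + 1) = Q j) (k : ℕ) :
    tensorFiltration C D k ⊔ tensorFiltration P Q (k + 1) = tensorFiltration P Q k :=
  le_antisymm
    (sup_le (tensorFiltration_mono (fun i => hCs i ▸ le_sup_left) (fun j => hDs j ▸ le_sup_left) k)
      (tensorFiltration_succ_le hP hQ k))
    (tensorFiltration_le_sup hCs hDs k)

end TensorFiltration

section TensorFiltrationField

variable {K V W : Type*} [Field K] [AddCommGroup V] [Module K V] [AddCommGroup W] [Module K W]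
  {P C : ℕ → Submodule K V} {Q D : ℕ → Submodule K W}

instance [∀ i, FiniteDimensional K (C i)] [∀ j, FiniteDimensional K (D j)] (k : ℕ) :
    FiniteDimensional K (tensorFiltration C D k) :=
  finiteDimensional_finset_sup _ _

theorem exists_tensorFiltration_projections (hP : Antitone P) (hQ : Antitone Q) (hC : C ≤ P)
    (hD : D ≤ Q) (hCd : ∀ i, Disjoint (C i) (P (i + 1))) (hDd : ∀ j, Disjoint (D j) (Q (j + 1)))
    (k : ℕ) : ∃ π : ℕ × ℕ → V ⊗[K] W →ₗ[K] V ⊗[K] W,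
      (∀ ij ∈ antidiagonal k, ∀ z ∈ map₂ (TensorProduct.mk K V W) (C ij.1) (D ij.2),
        π ij z = z) ∧
      (∀ ij ∈ antidiagonal k, ∀ ab ∈ antidiagonal k, ij ≠ ab →
        map₂ (TensorProduct.mk K V W) (C ab.1) (D ab.2) ≤ LinearMap.ker (π ij)) ∧
      ∀ ij ∈ antidiagonal k, tensorFiltration P Q (k + 1) ≤ LinearMap.ker (π ij) := by
  choose f hfC hfP using fun i => exists_eq_self_and_le_ker_of_disjoint (hCd i)
  choose g hgD hgQ using fun j => exists_eq_self_and_le_ker_of_disjoint (hDd j)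
  have hker : ∀ i j a b : ℕ, i + j ≤ a + b → (i, j) ≠ (a, b) →
      map₂ (TensorProduct.mk K V W) (P a) (Q b) ≤
        LinearMap.ker (TensorProduct.map (f i) (g j)) := by
    intro i j a b hle hne
    apply map₂_mk_le_ker_map
    by_cases hia : i < a
    · exact .inl ((hP hia).trans (hfP i))
    · have hjb : j < b := by
        simp only [ne_eq, Prod.mk.injEq] at hne
        omega
      exact .inr ((hQ hjb).trans (hgQ j))
  refine ⟨fun ij => TensorProduct.map (f ij.1) (g ij.2),
    fun ij _ => map_apply_eq_self_of_mem_map₂_mk (hfC _) (hgD _), ?_, ?_⟩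
  · rintro ⟨i, j⟩ hij ⟨a, b⟩ hab hne
    rw [mem_antidiagonal] at hij hab
    exact (map₂_le_map₂ (hC a) (hD b)).trans (hker i j a b (by omega) hne)
  · rintro ⟨i, j⟩ hij
    rw [mem_antidiagonal] at hij
    refine Finset.sup_le fun ⟨a, b⟩ hab => ?_
    rw [mem_antidiagonal] at hab
    exact hker i j a b (by omega) (by simp only [ne_eq, Prod.mk.injEq]; omega)

theorem disjoint_tensorFiltration_succ (hP : Antitone P) (hQ : Antitone Q) (hC : C ≤ P)
    (hD : D ≤ Q) (hCd : ∀ i, Disjoint (C i) (P (i + 1))) (hDd : ∀ j, Disjoint (D j) (Q (j + 1)))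
    (k : ℕ) : Disjoint (tensorFiltration C D k) (tensorFiltration P Q (k + 1)) :=
  have ⟨_, hid, hzero, hker⟩ := exists_tensorFiltration_projections hP hQ hC hD hCd hDd k
  disjoint_finset_sup_of_le_ker hid hzero hker

theorem finrank_tensorFiltration [∀ i, FiniteDimensional K (C i)] [∀ j, FiniteDimensional K (D j)]
    (hP : Antitone P) (hQ : Antitone Q) (hC : C ≤ P)
    (hD : D ≤ Q) (hCd : ∀ i, Disjoint (C i) (P (i + 1))) (hDd : ∀ j, Disjoint (D j) (Q (j + 1)))
    (k : ℕ) : Module.finrank K (tensorFiltration C D k) =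
      ∑ ij ∈ antidiagonal k, Module.finrank K (C ij.1) * Module.finrank K (D ij.2) := by
  obtain ⟨_, hid, hzero, -⟩ := exists_tensorFiltration_projections hP hQ hC hD hCd hDd k
  exact (finrank_finset_sup_eq_sum hid hzero).trans
    (Finset.sum_congr rfl fun ij _ => finrank_map₂_mk _ _)

theorem finiteDimensional_and_finrank_tensorFiltration_quotient (hP : Antitone P)
    (hQ : Antitone Q) (hPf : ∀ i, FiniteDimensional K (P i ⧸ (P (i + 1)).comap (P i).subtype))
    (hQf : ∀ j, FiniteDimensional K (Q j ⧸ (Q (j + 1)).comap (Q j).subtype)) (k : ℕ) :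
    FiniteDimensional K (tensorFiltration P Q k ⧸
      (tensorFiltration P Q (k + 1)).comap (tensorFiltration P Q k).subtype) ∧
    Module.finrank K (tensorFiltration P Q k ⧸
      (tensorFiltration P Q (k + 1)).comap (tensorFiltration P Q k).subtype) =
      ∑ ij ∈ antidiagonal k, Module.finrank K (P ij.1 ⧸ (P (ij.1 + 1)).comap (P ij.1).subtype) *
        Module.finrank K (Q ij.2 ⧸ (Q (ij.2 + 1)).comap (Q ij.2).subtype) := by
  choose C hCd hCs using fun i : ℕ => exists_disjoint_sup_eq_of_le (hP i.le_succ)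
  choose D hDd hDs using fun j : ℕ => exists_disjoint_sup_eq_of_le (hQ j.le_succ)
  have eC i := quotientComapSubtypeEquivOfDisjointOfSupEq (hCd i) (hCs i)
  have eD j := quotientComapSubtypeEquivOfDisjointOfSupEq (hDd j) (hDs j)
  have (i : ℕ) : FiniteDimensional K (C i) := (eC i).finiteDimensional
  have (j : ℕ) : FiniteDimensional K (D j) := (eD j).finiteDimensional
  have hC : C ≤ P := fun i => hCs i ▸ le_sup_left
  have hD : D ≤ Q := fun j => hDs j ▸ le_sup_left
  have e := quotientComapSubtypeEquivOfDisjointOfSupEq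
    (disjoint_tensorFiltration_succ hP hQ hC hD hCd hDd k)
    (tensorFiltration_sup_succ_eq hP hQ hCs hDs k)
  refine ⟨e.symm.finiteDimensional, ?_⟩
  simp only [e.finrank_eq, finrank_tensorFiltration hP hQ hC hD hCd hDd, (eC _).finrank_eq,
    (eD _).finrank_eq]

end TensorFiltrationField

namespace Ideal

theorem sup_pow_eq_sum_antidiagonal {R : Type*} [CommSemiring R] (I J : Ideal R) (k : ℕ) :
    (I ⊔ J) ^ k = ∑ ij ∈ antidiagonal k, I ^ ij.1 * J ^ ij.2 := by
  rw [← add_eq_sup, (Commute.all I J).add_pow']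
  refine Finset.sum_congr rfl fun ij hij => ?_
  rw [nsmul_eq_mul, natCast_eq_top (Nat.choose_pos (antidiagonal.fst_le hij)).ne', top_mul]

variable {F A B : Type*} [CommSemiring F] [CommRing A] [CommRing B] [Algebra F A] [Algebra F B]

open Algebra.TensorProduct

theorem restrictScalars_map_includeLeft_mul_map_includeRight (I : Ideal A) (J : Ideal B) :
    (I.map (includeLeft : A →ₐ[F] A ⊗[F] B) *
      J.map (includeRight : B →ₐ[F] A ⊗[F] B)).restrictScalars F =
      map₂ (TensorProduct.mk F A B) (I.restrictScalars F) (J.restrictScalars F) := by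
  rw [restrictScalars_mul, map_includeLeft_eq, map_includeRight_eq, LinearMap.rTensor,
    LinearMap.lTensor, TensorProduct.range_map, TensorProduct.range_map]
  simp only [range_subtype, LinearMap.range_id, map₂_eq_span_image2, Submodule.span_mul_span]
  apply le_antisymm <;> rw [Submodule.span_le]
  · rintro _ ⟨_, ⟨a, ha, b, -, rfl⟩, _, ⟨a', -, b', hb', rfl⟩, rfl⟩
    exact Submodule.subset_span ⟨a * a', I.mul_mem_right a' ha, b * b', J.mul_mem_left b hb',
      (tmul_mul_tmul a a' b b').symm⟩
  · rintro _ ⟨a, ha, b, hb, rfl⟩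
    refine Submodule.subset_span
      ⟨a ⊗ₜ 1, ⟨a, ha, 1, trivial, rfl⟩, 1 ⊗ₜ b, ⟨1, trivial, b, hb, rfl⟩, ?_⟩
    simp

theorem restrictScalars_sup_pow_eq_tensorFiltration (I : Ideal A) (J : Ideal B) (k : ℕ) :
    ((I.map (includeLeft : A →ₐ[F] A ⊗[F] B) ⊔
      J.map (includeRight : B →ₐ[F] A ⊗[F] B)) ^ k).restrictScalars F =
      tensorFiltration (fun i => (I ^ i).restrictScalars F)
        (fun j => (J ^ j).restrictScalars F) k := by
  calc _ = (antidiagonal k).sup fun ij => ((I ^ ij.1).map (includeLeft : A →ₐ[F] A ⊗[F] B) *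
        (J ^ ij.2).map (includeRight : B →ₐ[F] A ⊗[F] B)).restrictScalars F := by
        simp only [sup_pow_eq_sum_antidiagonal, sum_eq_sup, Ideal.map_pow]
        exact map_finset_sup (restrictScalarsLatticeHom F (A ⊗[F] B) (A ⊗[F] B)) _ _
    _ = _ := Finset.sup_congr rfl fun ij _ =>
        restrictScalars_map_includeLeft_mul_map_includeRight _ _

end Ideal

theorem finrank_gradedPiece_tensor_general {F : Type*} [Field F] {A B : Type*} [CommRing A] [CommRing B]
    [Algebra F A] [Algebra F B] (m : Ideal A) (n : Ideal B)
    (p : Ideal (A ⊗[F] B))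
    (hp : p = Ideal.span
      ((fun a => a ⊗ₜ[F] (1 : B)) '' (m : Set A) ∪ (fun b => (1 : A) ⊗ₜ[F] b) '' (n : Set B)))
    (hm : ∀ i, FiniteDimensional F (gradedPiece F m i))
    (hn : ∀ i, FiniteDimensional F (gradedPiece F n i))
    (k : ℕ) :
    FiniteDimensional F (gradedPiece F p k) ∧
    Module.finrank F (gradedPiece F p k) =
      ∑ i ∈ Finset.range (k + 1),
        Module.finrank F (gradedPiece F m i) * Module.finrank F (gradedPiece F n (k - i)) := by
  have hR (k : ℕ) : (p ^ k).restrictScalars F =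
      tensorFiltration (fun i => (m ^ i).restrictScalars F)
        (fun j => (n ^ j).restrictScalars F) k := by
    rw [hp, Ideal.span_union]
    exact Ideal.restrictScalars_sup_pow_eq_tensorFiltration m n k
  have hpiece := finiteDimensional_and_finrank_tensorFiltration_quotient
    (fun _ _ h => Ideal.pow_le_pow_right h) (fun _ _ h => Ideal.pow_le_pow_right h) hm hn k
  rw [← hR, ← hR] at hpiece
  rw [← Finset.Nat.sum_antidiagonal_eq_sum_range_succ
    (fun i j => Module.finrank F (gradedPiece F m i) * Module.finrank F (gradedPiece F n j))]
  exact hpiece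

/-- **Proposition 2.2 (Hilbert series of a product).** Let `F` be a field, `A`, `B`
commutative `F`-algebras, `m ⊂ A`, `n ⊂ B` ideals whose quotient maps induce `F`-algebra
isomorphisms `A/m ≅ F`, `B/n ≅ F`, and `p ⊂ A ⊗[F] B` the ideal generated by
`{a ⊗ 1 : a ∈ m} ∪ {1 ⊗ b : b ∈ n}`.  If all the graded pieces `mⁱ/mⁱ⁺¹` and `nⁱ/nⁱ⁺¹`
are finite dimensional over `F`, then for every `k`,
`dim_F (pᵏ/pᵏ⁺¹) = ∑_{i+j=k} dim_F (mⁱ/mⁱ⁺¹) · dim_F (nʲ/nʲ⁺¹)`;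
i.e. the Hilbert series satisfy `H(A⊗B, p) = H(A,m)·H(B,n)`. -/
theorem finrank_gradedPiece_tensor {F : Type*} [Field F] {A B : Type*} [CommRing A] [CommRing B]
    [Algebra F A] [Algebra F B] (m : Ideal A) (n : Ideal B)
    (hA : Function.Bijective (algebraMap F (A ⧸ m)))
    (hB : Function.Bijective (algebraMap F (B ⧸ n)))
    (p : Ideal (A ⊗[F] B))
    (hp : p = Ideal.span
      ((fun a => a ⊗ₜ[F] (1 : B)) '' (m : Set A) ∪ (fun b => (1 : A) ⊗ₜ[F] b) '' (n : Set B)))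
    (hm : ∀ i, FiniteDimensional F (gradedPiece F m i))
    (hn : ∀ i, FiniteDimensional F (gradedPiece F n i))
    (k : ℕ) :
    FiniteDimensional F (gradedPiece F p k) ∧
    Module.finrank F (gradedPiece F p k) =
      ∑ i ∈ Finset.range (k + 1),
        Module.finrank F (gradedPiece F m i) * Module.finrank F (gradedPiece F n (k - i)) :=
  finrank_gradedPiece_tensor_general m n p hp hm hn k
end

section
/- Let b : {1,…,n} → ℕ be a weakly increasing function (so its fibers, the 'blocks', are consecutive intervals), and let x be a permutation of {1,…,n} such that x(i) > x(j) whenever i < j and b(i) = b(j) (x is maximal in its left W_P-coset for the parabolic P determined by b). Then for all indices i > j one has x⁻¹(i) > x⁻¹(j) if and only if b(x⁻¹(i)) > b(x⁻¹(j)); that is, {(i,j) : i > j, x⁻¹(i) > x⁻¹(j)} = {(i,j) : i > j, b(x⁻¹(i)) > b(x⁻¹(j))}. -/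
theorem Monotone.lt_iff_lt_of_map_lt {α β γ : Type*} [LinearOrder α] [Preorder β]
    [PartialOrder γ] {b : α → γ} (hb : Monotone b) {f : α → β}
    (hf : ∀ p q, p < q → b p = b q → f q < f p) {p q : α} (hpq : f p < f q) :
    p < q ↔ b p < b q := by
  refine ⟨fun hlt => (hb hlt.le).lt_of_ne fun heq => ?_, hb.reflect_lt⟩
  exact (hf p q hlt heq).asymm hpq

/-- **Lemma 4.3 (2) (type A).** Let `b : {0,…,n-1} → ℕ` be weakly increasing, encoding a
standard parabolic `P` whose Levi blocks are the fibers of `b`, and let `x` be a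
permutation that is maximal in its left `W_P`-coset (i.e. `x(i) > x(j)` whenever `i < j`
and `b(i) = b(j)`). Then for all `i > j`: `x⁻¹(i) > x⁻¹(j)` iff `b(x⁻¹(i)) > b(x⁻¹(j))`;
that is, the roots of `U⁻(x) ∩ U⁻` are exactly those of `U_P⁻(x) ∩ U⁻`. -/
theorem umaxmin_max {n : ℕ} (b : Fin n → ℕ) (hb : Monotone b) (x : Equiv.Perm (Fin n))
    (hx : ∀ i j : Fin n, i < j → b i = b j → x j < x i) :
    ∀ i j : Fin n, j < i → (x⁻¹ j < x⁻¹ i ↔ b (x⁻¹ j) < b (x⁻¹ i)) := by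
  intro i j hji
  exact hb.lt_iff_lt_of_map_lt hx (by simpa using hji)
end
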